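/- arXiv:1311.2578 — 5 statements merged into one kernel-verified Lean document; each statement's English description precedes it below -/
import Mathlib

section
/- Let S be a uniformly random ℓ-element subset of [n], where ℓ is an integer with 1 ≤ ℓ ≤ n. Then E[ max_{x ∈ P(ℓ/n, S)} c^T x ] ≥ (ℓ/n)² · OPT. -/
open Finset

/-- The optimal value of the packing LP with capacities scaled by `f`,
restricted to the requests in `S`. -/
noncomputable def lpValue {n K m : ℕ} (c : Fin n → Fin K → ℝ)
    (a : Fin m → Fin n → Fin K → ℝ) (b : Fin m → ℝ) (f : ℝ) (S : Finset (Fin n)) : ℝ :=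
  sSup ((fun x : Fin n → Fin K → ℝ => ∑ j, ∑ k, c j k * x j k) ''
    {x | (∀ j k, 0 ≤ x j k) ∧ (∀ i, ∑ j, ∑ k, a i j k * x j k ≤ f * b i) ∧
         (∀ j, ∑ k, x j k ≤ 1) ∧ ∀ j, j ∉ S → ∀ k, x j k = 0})

/-!
If `x` is feasible for the full LP, then `ℓ/n · x`, with the requests outside `S` deleted, lies in
`P(ℓ/n, S)`, so the value on `S` is at least `ℓ/n · ∑_{j ∈ S} c_j x_j`. Averaging over `S` gives a
second factor `ℓ/n`, since each request lies in exactly `ℓ/n · C(n, ℓ)` of the `ℓ`-subsets.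
-/

namespace Finset

variable {α β : Type*} [DecidableEq α]

lemma card_filter_mem_powersetCard (s : Finset α) {ℓ : ℕ} (hℓ : 1 ≤ ℓ) {j : α} (hj : j ∈ s) :
    #{S ∈ s.powersetCard ℓ | j ∈ S} = (#s - 1).choose (ℓ - 1) := by
  simpa [singleton_subset_iff] using
    card_filter_powersetCard_subset {j} s ℓ (singleton_subset_iff.2 hj) (by simpa using hℓ)

lemma sum_powersetCard_sum [AddCommMonoid β] (s : Finset α) {ℓ : ℕ} (hℓ : 1 ≤ ℓ) (g : α → β) :
    ∑ S ∈ s.powersetCard ℓ, ∑ j ∈ S, g j = (#s - 1).choose (ℓ - 1) • ∑ j ∈ s, g j := by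
  rw [sum_comm' (t' := s) (s' := fun j => {S ∈ s.powersetCard ℓ | j ∈ S}), smul_sum]
  · exact sum_congr rfl fun j hj => by rw [sum_const, card_filter_mem_powersetCard s hℓ hj]
  · intro S j
    simp only [mem_filter, mem_powersetCard]
    exact ⟨fun ⟨hS, hj⟩ => ⟨⟨hS, hj⟩, hS.1 hj⟩, fun ⟨hS, _⟩ => hS⟩

end Finset

lemma Nat.choose_pred_pred_mul {n ℓ : ℕ} (hℓ : 1 ≤ ℓ) :
    (n - 1).choose (ℓ - 1) * n = ℓ * n.choose ℓ := by
  obtain ⟨ℓ, rfl⟩ := Nat.exists_eq_add_of_le' hℓ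
  rcases n with _ | n
  · simp
  simpa [mul_comm] using Nat.add_one_mul_choose_eq n ℓ

section PackingLP

variable {n K m : ℕ}

/-- The polytope `P(f, S)`. -/
def packingPolytope (a : Fin m → Fin n → Fin K → ℝ) (b : Fin m → ℝ) (f : ℝ)
    (S : Finset (Fin n)) : Set (Fin n → Fin K → ℝ) :=
  {x | (∀ j k, 0 ≤ x j k) ∧ (∀ i, ∑ j, ∑ k, a i j k * x j k ≤ f * b i) ∧
       (∀ j, ∑ k, x j k ≤ 1) ∧ ∀ j, j ∉ S → ∀ k, x j k = 0}

def restrictScale (r : ℝ) (S : Finset (Fin n)) (x : Fin n → Fin K → ℝ) : Fin n → Fin K → ℝ :=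
  fun j k => if j ∈ S then r * x j k else 0

variable (c : Fin n → Fin K → ℝ) (a : Fin m → Fin n → Fin K → ℝ) (b : Fin m → ℝ)

lemma le_lpValue (hc : ∀ j k, 0 ≤ c j k) {f : ℝ} {S : Finset (Fin n)}
    {x : Fin n → Fin K → ℝ} (hx : x ∈ packingPolytope a b f S) :
    ∑ j, ∑ k, c j k * x j k ≤ lpValue c a b f S := by
  refine le_csSup ⟨∑ j, ∑ k, c j k, ?_⟩ ⟨x, hx, rfl⟩
  rintro _ ⟨y, ⟨hy0, -, hy1, -⟩, rfl⟩
  refine sum_le_sum fun j _ => sum_le_sum fun k _ => mul_le_of_le_one_right (hc j k) ?_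
  exact (single_le_sum (fun k _ => hy0 j k) (mem_univ k)).trans (hy1 j)

lemma lpValue_le {f : ℝ} (hf : 0 ≤ f) (hb : ∀ i, 0 ≤ b i) {S : Finset (Fin n)} {B : ℝ}
    (h : ∀ x ∈ packingPolytope a b f S, ∑ j, ∑ k, c j k * x j k ≤ B) :
    lpValue c a b f S ≤ B := by
  have hzero : (0 : Fin n → Fin K → ℝ) ∈ packingPolytope a b f S :=
    ⟨fun _ _ => le_rfl, fun i => by simpa using mul_nonneg hf (hb i), fun _ => by simp,
      fun _ _ _ => rfl⟩
  exact csSup_le ⟨_, _, hzero, rfl⟩ (by rintro _ ⟨x, hx, rfl⟩; exact h x hx)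

variable {a b} in
lemma restrictScale_mem_packingPolytope (ha : ∀ i j k, 0 ≤ a i j k) {r f : ℝ}
    (hr0 : 0 ≤ r) (hr1 : r ≤ 1) {S T : Finset (Fin n)} {x : Fin n → Fin K → ℝ}
    (hx : x ∈ packingPolytope a b f T) :
    restrictScale r S x ∈ packingPolytope a b (r * f) S := by
  obtain ⟨hx0, hxa, hx1, -⟩ := hx
  refine ⟨fun j k => ?_, fun i => ?_, fun j => ?_, fun j hj k => if_neg hj⟩
  · unfold restrictScale; split_ifs
    exacts [mul_nonneg hr0 (hx0 j k), le_rfl]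
  · calc ∑ j, ∑ k, a i j k * restrictScale r S x j k
        ≤ ∑ j, ∑ k, r * (a i j k * x j k) := by
          refine sum_le_sum fun j _ => sum_le_sum fun k _ => ?_
          unfold restrictScale; split_ifs
          · exact (mul_left_comm _ _ _).le
          · simpa using mul_nonneg hr0 (mul_nonneg (ha i j k) (hx0 j k))
      _ = r * ∑ j, ∑ k, a i j k * x j k := by simp only [mul_sum]
      _ ≤ r * f * b i := by rw [mul_assoc]; exact mul_le_mul_of_nonneg_left (hxa i) hr0
  · unfold restrictScale; split_ifs
    · rw [← mul_sum]; exact mul_le_one₀ hr1 (sum_nonneg fun k _ => hx0 j k) (hx1 j)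
    · simp

lemma sum_mul_restrictScale (r : ℝ) (S : Finset (Fin n)) (x : Fin n → Fin K → ℝ) :
    ∑ j, ∑ k, c j k * restrictScale r S x j k = r * ∑ j ∈ S, ∑ k, c j k * x j k := by
  rw [mul_sum, ← sum_subset (subset_univ S) fun j _ hj => by simp [restrictScale, hj]]
  exact sum_congr rfl fun j hj => by simp only [restrictScale, if_pos hj, mul_sum, mul_left_comm]

variable {c a} in
lemma mul_sum_le_lpValue (hc : ∀ j k, 0 ≤ c j k) (ha : ∀ i j k, 0 ≤ a i j k) {r : ℝ}
    (hr0 : 0 ≤ r) (hr1 : r ≤ 1) (S : Finset (Fin n)) {x : Fin n → Fin K → ℝ}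
    (hx : x ∈ packingPolytope a b 1 univ) :
    r * ∑ j ∈ S, ∑ k, c j k * x j k ≤ lpValue c a b r S := by
  have h := le_lpValue c a b hc (restrictScale_mem_packingPolytope (S := S) ha hr0 hr1 hx)
  rwa [mul_one, sum_mul_restrictScale] at h

end PackingLP

/-- for a uniformly random `ℓ`-subset `S` of `[n]` with `1 ≤ ℓ ≤ n`,
`E[max_{x ∈ P(ℓ/n, S)} cᵀx] ≥ (ℓ/n)² · OPT`. -/
theorem stmt_1 (n K m : ℕ)
    (c : Fin n → Fin K → ℝ) (hc : ∀ j k, 0 ≤ c j k)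
    (a : Fin m → Fin n → Fin K → ℝ) (ha0 : ∀ i j k, 0 ≤ a i j k)
    (b : Fin m → ℝ) (hb : ∀ i, 0 ≤ b i)
    (ℓ : ℕ) (hℓ1 : 1 ≤ ℓ) (hℓn : ℓ ≤ n) :
    (∑ S ∈ Finset.powersetCard ℓ (Finset.univ : Finset (Fin n)),
        lpValue c a b ((ℓ : ℝ) / n) S) / (n.choose ℓ : ℝ)
      ≥ ((ℓ : ℝ) / n) ^ 2 * lpValue c a b 1 Finset.univ := by
  have hn : (0 : ℝ) < n := by exact_mod_cast hℓ1.trans hℓn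
  set r : ℝ := (ℓ : ℝ) / n
  have hr0 : 0 < r := div_pos (by exact_mod_cast hℓ1) hn
  have hr1 : r ≤ 1 := div_le_one_of_le₀ (by exact_mod_cast hℓn) hn.le
  have hchoose : (0 : ℝ) < n.choose ℓ := by exact_mod_cast Nat.choose_pos hℓn
  have hcount : ((n - 1).choose (ℓ - 1) : ℝ) = r * n.choose ℓ := by
    rw [eq_comm, div_mul_eq_mul_div, div_eq_iff hn.ne']
    exact_mod_cast (Nat.choose_pred_pred_mul hℓ1).symm
  rw [ge_iff_le, le_div_iff₀ hchoose, mul_right_comm, ← le_div_iff₀' (by positivity)]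
  refine lpValue_le c a b zero_le_one hb fun x hx => ?_
  rw [le_div_iff₀' (by positivity)]
  calc r ^ 2 * n.choose ℓ * ∑ j, ∑ k, c j k * x j k
      = r * ∑ S ∈ powersetCard ℓ univ, ∑ j ∈ S, ∑ k, c j k * x j k := by
        rw [sum_powersetCard_sum _ hℓ1, card_univ, Fintype.card_fin, nsmul_eq_mul, hcount]
        ring
    _ ≤ ∑ S ∈ powersetCard ℓ univ, lpValue c a b r S := by
        rw [mul_sum]
        exact sum_le_sum fun S _ => mul_sum_le_lpValue b hc ha0 hr0.le hr1 S hx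
end

section
/- Let F be a real random variable with F ∈ (0, 1] almost surely, let ξ > 0, and let M = ⌊1/ξ + 1⌋. Then E[F] ≥ 1 − 3ξ − Σ_{i=3}^{M} (i+1)·ξ·P[F ≤ 1/(1 + i·ξ)] − P[F ≤ 1/(1 + (M+1)·ξ)]. -/
/-!
For `x ∈ (0, 1]` let `j = ⌊(1/x - 1)/ξ⌋`, so that `1/(1 + (j+1)ξ) < x ≤ 1/(1 + jξ)`; in particular
`x > 1 - (j+1)ξ`. If `j < 3` this already gives `x ≥ 1 - 3ξ`; if `3 ≤ j ≤ M` the indicator of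
`x ≤ 1/(1 + jξ)` contributes the missing `(j+1)ξ`; if `j > M` the last indicator equals `1`.
Taking expectations of this pointwise inequality gives the theorem.
-/

open MeasureTheory

lemma one_sub_le_one_div_one_add {a : ℝ} (ha : 0 ≤ a) : 1 - a ≤ 1 / (1 + a) := by
  rw [le_div_iff₀ (by linarith)]
  nlinarith

lemma le_one_div_one_add_mul_iff {x ξ : ℝ} (hx : 0 < x) (hξ : 0 < ξ) (hx1 : x ≤ 1) (n : ℕ) :
    x ≤ 1 / (1 + n * ξ) ↔ n ≤ ⌊(1 / x - 1) / ξ⌋₊ := by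
  have hx' : 1 ≤ 1 / x := by rw [le_div_iff₀ hx]; linarith
  have hc : 0 ≤ (1 / x - 1) / ξ := div_nonneg (by linarith) hξ.le
  rw [Nat.le_floor_iff hc, le_div_iff₀ hξ, le_div_iff₀ (by positivity),
    le_sub_iff_add_le, le_div_iff₀ hx]
  constructor <;> intro h <;> linarith

lemma one_sub_sum_indicator_le {ξ x : ℝ} (hξ : 0 < ξ) (M : ℕ) (hx : x ∈ Set.Ioc 0 1) :
    1 - 3 * ξ
      - ∑ i ∈ Finset.Icc 3 M, ((i : ℝ) + 1) * ξ * (Set.Iic (1 / (1 + (i : ℝ) * ξ))).indicator 1 x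
      - (Set.Iic (1 / (1 + ((M : ℝ) + 1) * ξ))).indicator 1 x ≤ x := by
  obtain ⟨hx0, hx1⟩ := hx
  have hiff := le_one_div_one_add_mul_iff hx0 hξ hx1
  set j := ⌊(1 / x - 1) / ξ⌋₊
  have hind (n : ℕ) : (Set.Iic (1 / (1 + (n : ℝ) * ξ))).indicator (1 : ℝ → ℝ) x
      = if n ≤ j then 1 else 0 := by
    simp only [Set.indicator_apply, Set.mem_Iic, hiff, Pi.one_apply]
  have hlast := hind (M + 1)
  push_cast at hlast
  rw [hlast]
  have hterm_nonneg (i : ℕ) :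
      0 ≤ ((i : ℝ) + 1) * ξ * (Set.Iic (1 / (1 + (i : ℝ) * ξ))).indicator 1 x := by
    rw [hind]; split_ifs <;> positivity
  have hsum_nonneg := Finset.sum_nonneg fun i (_ : i ∈ Finset.Icc 3 M) => hterm_nonneg i
  have hx_gt : 1 - ((j : ℝ) + 1) * ξ < x := by
    have h := (hiff (j + 1)).not.mpr (by omega)
    push_cast at h
    exact (one_sub_le_one_div_one_add (by positivity)).trans_lt (not_le.mp h)
  split_ifs with hMj
  · linarith
  obtain hj3 | hj3 := lt_or_ge j 3
  · have hj : (j : ℝ) + 1 ≤ 3 := by exact_mod_cast hj3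
    nlinarith
  · have hterm : ((j : ℝ) + 1) * ξ ≤ ∑ i ∈ Finset.Icc 3 M,
        ((i : ℝ) + 1) * ξ * (Set.Iic (1 / (1 + (i : ℝ) * ξ))).indicator 1 x := by
      refine le_of_eq_of_le ?_ (Finset.single_le_sum (fun i _ => hterm_nonneg i)
        (Finset.mem_Icc.mpr ⟨hj3, by omega⟩))
      rw [hind, if_pos le_rfl, mul_one]
    linarith

lemma const_sub_sum_measureReal_le_integral {Ω ι : Type*} [MeasurableSpace Ω] {μ : Measure Ω}
    [IsProbabilityMeasure μ] {f : Ω → ℝ} (hf : Integrable f μ) (c : ℝ) (s : Finset ι)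
    (a : ι → ℝ) {A : ι → Set Ω} (hA : ∀ i, MeasurableSet (A i)) {B : Set Ω}
    (hB : MeasurableSet B)
    (h : ∀ᵐ ω ∂μ, c - ∑ i ∈ s, a i * (A i).indicator 1 ω - B.indicator 1 ω ≤ f ω) :
    c - ∑ i ∈ s, a i * μ.real (A i) - μ.real B ≤ ∫ ω, f ω ∂μ := by
  have hAint (i : ι) : Integrable (fun ω => a i * (A i).indicator (1 : Ω → ℝ) ω) μ :=
    ((integrable_const 1).indicator (hA i)).const_mul (a i)
  have hsum : Integrable (fun ω => ∑ i ∈ s, a i * (A i).indicator (1 : Ω → ℝ) ω) μ :=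
    integrable_finsetSum s fun i _ => hAint i
  have hBint : Integrable (B.indicator (1 : Ω → ℝ)) μ := (integrable_const 1).indicator hB
  have hcsum : Integrable (fun ω => c - ∑ i ∈ s, a i * (A i).indicator (1 : Ω → ℝ) ω) μ :=
    (integrable_const c).sub hsum
  calc c - ∑ i ∈ s, a i * μ.real (A i) - μ.real B
      = ∫ ω, c - ∑ i ∈ s, a i * (A i).indicator 1 ω - B.indicator 1 ω ∂μ := by
        rw [integral_sub hcsum hBint,
          integral_sub (integrable_const c) hsum, integral_finsetSum s fun i _ => hAint i,
          integral_const, integral_indicator_one hB]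
        simp only [probReal_univ, one_smul, integral_const_mul, integral_indicator_one (hA _)]
    _ ≤ ∫ ω, f ω ∂μ := integral_mono_ae (hcsum.sub hBint) hf h

/-- for a random variable `F ∈ (0,1]` a.s., `ξ > 0` and
`M = ⌊1/ξ + 1⌋`, one has
`E[F] ≥ 1 − 3ξ − Σ_{i=3}^{M} (i+1)·ξ·P[F ≤ 1/(1+iξ)] − P[F ≤ 1/(1+(M+1)ξ)]`. -/
theorem stmt_7 {Ω : Type*} [MeasurableSpace Ω] (μ : Measure Ω)
    [IsProbabilityMeasure μ] (F : Ω → ℝ) (hF : Measurable F)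
    (hrange : ∀ᵐ ω ∂μ, F ω ∈ Set.Ioc (0 : ℝ) 1)
    (ξ : ℝ) (hξ : 0 < ξ) :
    ∫ ω, F ω ∂μ ≥ 1 - 3 * ξ
      - ∑ i ∈ Finset.Icc 3 ⌊1 / ξ + 1⌋₊,
          ((i : ℝ) + 1) * ξ * (μ {ω | F ω ≤ 1 / (1 + (i : ℝ) * ξ)}).toReal
      - (μ {ω | F ω ≤ 1 / (1 + ((⌊1 / ξ + 1⌋₊ : ℝ) + 1) * ξ)}).toReal := by
  have hmeas (t : ℝ) : MeasurableSet {ω | F ω ≤ t} := measurableSet_le hF measurable_const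
  have hint : Integrable F μ := Integrable.of_bound hF.aestronglyMeasurable 1 <| by
    filter_upwards [hrange] with ω hω
    rw [Real.norm_eq_abs, abs_le]
    exact ⟨by linarith [hω.1], hω.2⟩
  refine const_sub_sum_measureReal_le_integral hint _ _ _ (fun i => hmeas _) (hmeas _) ?_
  filter_upwards [hrange] with ω hω
  exact one_sub_sum_indicator_le hξ _ hω
end

section
/- Let d ≥ 1 and b > 1 be real numbers and let r ∈ (0, 1) satisfy 9·√((1 + ln d)/b) ≤ r and 9·√((1 + ln d)/b) ≤ 1 − r. Define δ = (1 − r) − r/(b − 1). Then 0 < δ < 1 and (δ²/3)·(1 − δ)·(b − 1) ≥ ln d + (1 − r)·√b. -/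
/-!
Write `m = min r (1 - r)`. Both hypotheses say `9 √((1 + ln d)/b) ≤ m`, i.e.
`81 (1 + ln d) ≤ b m²`, and in particular `√b · m ≥ 9`. The latter forces `r/(b - 1)` to be
at most `(1 - r)/80`, so `δ ≥ (79/80)(1 - r)`. Since `(1 - δ)(b - 1) = r b`, the left-hand side is
at least `(79/80)² / 3 · b r (1 - r)²`, while `m² ≤ 2 r (1 - r)²` and `m ≤ 2 r (1 - r)` bound
`ln d` and `(1 - r) √b` by `2/81` and `2/9` of `b r (1 - r)²`; and `2/81 + 2/9 < 1/4 < (79/80)² / 3`.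
-/

namespace OnlinePackingLP

open Real

theorem min_one_sub_le {r : ℝ} (h0 : 0 ≤ r) (h1 : r ≤ 1) : min r (1 - r) ≤ 2 * r * (1 - r) := by
  rcases le_total r (1 / 2) with h | h
  · rw [min_eq_left (by linarith)]; nlinarith
  · rw [min_eq_right (by linarith)]; nlinarith

theorem sq_min_one_sub_le {r : ℝ} (h0 : 0 ≤ r) :
    min r (1 - r) ^ 2 ≤ 2 * r * (1 - r) ^ 2 := by
  rcases le_total r (1 / 2) with h | h
  · rw [min_eq_left (by linarith)]; nlinarith [mul_nonneg h0 (sub_nonneg.2 h)]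
  · rw [min_eq_right (by linarith)]; nlinarith

theorem sq_mul_le_mul_sq_of_mul_sqrt_div_le {k c b x : ℝ} (hk : 0 ≤ k) (hc : 0 ≤ c) (hb : 0 < b)
    (h : k * √(c / b) ≤ x) : k ^ 2 * c ≤ b * x ^ 2 := by
  have hsq := pow_le_pow_left₀ (by positivity) h 2
  rw [mul_pow, sq_sqrt (by positivity), mul_div_assoc', div_le_iff₀ hb] at hsq
  exact hsq.trans_eq (mul_comm _ _)

theorem le_sqrt_mul_of_sq_le_mul_sq {a b x : ℝ} (hb : 0 ≤ b) (hx : 0 ≤ x)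
    (h : a ^ 2 ≤ b * x ^ 2) : a ≤ √b * x := by
  rw [← sqrt_sq hx, ← sqrt_mul hb]
  exact le_sqrt_of_sq_le h

noncomputable def delta (r b : ℝ) : ℝ := (1 - r) - r / (b - 1)

theorem one_sub_delta_mul {r b : ℝ} (hb : b ≠ 1) : (1 - delta r b) * (b - 1) = r * b := by
  have : b - 1 ≠ 0 := sub_ne_zero.mpr hb
  unfold delta
  field_simp
  ring

theorem delta_lt_one {r b : ℝ} (hr : 0 < r) (hb : 1 < b) : delta r b < 1 := by
  have : 0 < r / (b - 1) := div_pos hr (by linarith)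
  unfold delta
  linarith

theorem mul_one_sub_le_delta {r b : ℝ} (hb : 1 < b) (h : 9 ≤ √b * (1 - r)) :
    79 / 80 * (1 - r) ≤ delta r b := by
  have hsb : 1 < √b := by simpa using sqrt_lt_sqrt zero_le_one hb
  have key : 80 * r ≤ (1 - r) * (b - 1) := by
    have hsq := sq_sqrt (show 0 ≤ b by linarith)
    have h1r : 0 < 1 - r := by nlinarith
    have h9 : 9 * √b ≤ (1 - r) * b := by nlinarith
    nlinarith
  have : r / (b - 1) ≤ (1 - r) / 80 := by
    rw [div_le_div_iff₀ (by linarith) (by norm_num)]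
    linarith
  unfold delta
  linarith

theorem mul_sq_le_delta_sq_mul {r b : ℝ} (hr0 : 0 < r) (hr1 : r < 1) (hb : 1 < b)
    (h : 79 / 80 * (1 - r) ≤ delta r b) :
    b * r * (1 - r) ^ 2 / 4 ≤ delta r b ^ 2 / 3 * (1 - delta r b) * (b - 1) := by
  have hsq := pow_le_pow_left₀ (by linarith) h 2
  rw [mul_assoc (delta r b ^ 2 / 3), one_sub_delta_mul hb.ne']
  have : 0 ≤ r * b := by positivity
  nlinarith

theorem log_add_le_of_min {L r b : ℝ} (hr0 : 0 ≤ r) (hr1 : r ≤ 1) (hb : 0 ≤ b)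
    (hL : 81 * (1 + L) ≤ b * min r (1 - r) ^ 2) (hs : 9 ≤ √b * min r (1 - r)) :
    L + (1 - r) * √b ≤ b * r * (1 - r) ^ 2 / 4 := by
  have hsq := sq_min_one_sub_le hr0
  have hmin := min_one_sub_le hr0 hr1
  have hlog : L ≤ 2 / 81 * (b * r * (1 - r) ^ 2) := by nlinarith
  have hsqrt : (1 - r) * √b ≤ 2 / 9 * (b * r * (1 - r) ^ 2) := by
    have h1r : 0 ≤ (1 - r) * √b := mul_nonneg (by linarith) (sqrt_nonneg b)
    have h1b : 0 ≤ (1 - r) * b := mul_nonneg (by linarith) hb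
    have := calc 9 * ((1 - r) * √b) ≤ √b * min r (1 - r) * ((1 - r) * √b) :=
          mul_le_mul_of_nonneg_right hs h1r
      _ = (1 - r) * b * min r (1 - r) := by
          linear_combination (1 - r) * min r (1 - r) * mul_self_sqrt hb
      _ ≤ (1 - r) * b * (2 * r * (1 - r)) := mul_le_mul_of_nonneg_left hmin h1b
    linarith
  have : 0 ≤ b * r * (1 - r) ^ 2 := mul_nonneg (mul_nonneg hb hr0) (sq_nonneg _)
  linarith

end OnlinePackingLP

open OnlinePackingLP in
/-- for `d ≥ 1`, `b > 1`, and `r ∈ (0,1)` with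
`9√((1+ln d)/b) ≤ r` and `9√((1+ln d)/b) ≤ 1 − r`, setting
`δ = (1 − r) − r/(b − 1)` one has `0 < δ < 1` and
`(δ²/3)·(1 − δ)·(b − 1) ≥ ln d + (1 − r)·√b`. -/
theorem stmt_11 (d b r : ℝ) (hd : 1 ≤ d) (hb : 1 < b)
    (hr0 : 0 < r) (hr1 : r < 1)
    (hlow : 9 * Real.sqrt ((1 + Real.log d) / b) ≤ r)
    (hhigh : 9 * Real.sqrt ((1 + Real.log d) / b) ≤ 1 - r) :
    0 < (1 - r) - r / (b - 1) ∧ (1 - r) - r / (b - 1) < 1 ∧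
    (((1 - r) - r / (b - 1)) ^ 2 / 3) * (1 - ((1 - r) - r / (b - 1))) * (b - 1)
      ≥ Real.log d + (1 - r) * Real.sqrt b := by
  show 0 < delta r b ∧ delta r b < 1 ∧
    delta r b ^ 2 / 3 * (1 - delta r b) * (b - 1) ≥ Real.log d + (1 - r) * √b
  have hlog : 0 ≤ Real.log d := Real.log_nonneg hd
  have hm0 : 0 ≤ min r (1 - r) := le_min hr0.le (by linarith)
  have hbm : 81 * (1 + Real.log d) ≤ b * min r (1 - r) ^ 2 := by
    have := sq_mul_le_mul_sq_of_mul_sqrt_div_le (by norm_num) (by linarith) (by linarith)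
      (le_min hlow hhigh)
    linarith
  have hsm : 9 ≤ √b * min r (1 - r) :=
    le_sqrt_mul_of_sq_le_mul_sq (by linarith) hm0 (by linarith)
  have hδ : 79 / 80 * (1 - r) ≤ delta r b :=
    mul_one_sub_le_delta hb (hsm.trans (by gcongr; exact min_le_right _ _))
  refine ⟨by linarith, delta_lt_one hr0 hb, ?_⟩
  exact (log_add_le_of_min hr0.le hr1.le (by linarith) hbm hsm).trans
    (mul_sq_le_delta_sq_mul hr0 hr1 hb hδ)
end

section
/- Let d ≥ 1 and b ≥ 2 be real numbers. Define ψ = d^{1/(b−1)} and δ = 4·e·ψ·(1 − 1/b) − 1. Then δ > 0 and ( e^δ / (1 + δ)^{1+δ} )^{b/(4·e·ψ)} ≤ 1/(2d). -/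
/-!
Write `x = 1 + δ = 4eψ(1 - 1/b)` and `t = b/(4eψ)`, so that `t x = b - 1`. Taking logarithms, the
left-hand side is `exp (t δ - t x log x)`, and since `(b - 1) log ψ = log d` the exponent equals
`-t - log d - (b - 1) log (4(1 - 1/b))`. For `b ≥ 2` we have `4(1 - 1/b) ≥ 2` and `b - 1 ≥ 1`, so
the exponent is at most `-log 2 - log d = log (1/(2d))`.
-/

open Real

theorem rpow_exp_div_rpow_self_eq {δ : ℝ} (hδ : 0 < 1 + δ) (t : ℝ) :
    (exp δ / (1 + δ) ^ (1 + δ)) ^ t = exp (t * δ - t * (1 + δ) * log (1 + δ)) := by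
  rw [rpow_def_of_pos (by positivity), log_div (exp_ne_zero δ) (by positivity), log_exp,
    log_rpow hδ]
  ring_nf

theorem two_le_four_mul_one_sub_inv {b : ℝ} (hb : 2 ≤ b) : 2 ≤ 4 * (1 - 1 / b) := by
  have : 1 / b ≤ 1 / 2 := one_div_le_one_div_of_le two_pos hb
  linarith

theorem log_two_le_mul_log_four_mul_one_sub_inv {b : ℝ} (hb : 2 ≤ b) :
    log 2 ≤ (b - 1) * log (4 * (1 - 1 / b)) := by
  have hlog : log 2 ≤ log (4 * (1 - 1 / b)) := log_le_log two_pos (two_le_four_mul_one_sub_inv hb)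
  nlinarith [log_pos one_lt_two]

/-- for reals `d ≥ 1`, `b ≥ 2`, with `ψ = d^{1/(b−1)}` and
`δ = 4eψ(1 − 1/b) − 1`, one has `δ > 0` and
`(e^δ/(1+δ)^{1+δ})^{b/(4eψ)} ≤ 1/(2d)`. -/
theorem stmt_12 (d b : ℝ) (hd : 1 ≤ d) (hb : 2 ≤ b)
    (ψ δ : ℝ) (hψ : ψ = d ^ (1 / (b - 1)))
    (hδ : δ = 4 * Real.exp 1 * ψ * (1 - 1 / b) - 1) :
    0 < δ ∧
    (Real.exp δ / (1 + δ) ^ (1 + δ)) ^ (b / (4 * Real.exp 1 * ψ)) ≤ 1 / (2 * d) := by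
  have hd0 : 0 < d := by linarith
  have hψ1 : 1 ≤ ψ := hψ ▸ one_le_rpow hd (one_div_pos.mpr (by linarith)).le
  have he : 1 < exp 1 := one_lt_exp_iff.mpr one_pos
  have hb4 : 2 ≤ 4 * (1 - 1 / b) := two_le_four_mul_one_sub_inv hb
  have hx : 1 + δ = exp 1 * ψ * (4 * (1 - 1 / b)) := by rw [hδ]; ring
  have heψ : 1 < exp 1 * ψ := he.trans_le (le_mul_of_one_le_right (by positivity) hψ1)
  have hδ0 : 0 < δ := by nlinarith
  refine ⟨hδ0, ?_⟩
  have htx : b / (4 * exp 1 * ψ) * (1 + δ) = b - 1 := by rw [hx]; field_simp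
  set t := b / (4 * exp 1 * ψ)
  have ht : 0 < t := by positivity
  have hlogx : log (1 + δ) = 1 + log ψ + log (4 * (1 - 1 / b)) := by
    rw [hx, log_mul (by positivity) (by positivity), log_mul (by positivity) (by positivity),
      log_exp]
  have hlogψ : (b - 1) * log ψ = log d := by
    rw [hψ, log_rpow hd0]; field_simp [show b - 1 ≠ 0 by linarith]
  rw [rpow_exp_div_rpow_self_eq (by linarith), ← exp_log (by positivity : (0 : ℝ) < 1 / (2 * d)),
    exp_le_exp]
  calc t * δ - t * (1 + δ) * log (1 + δ)
      = -t - log d - (b - 1) * log (4 * (1 - 1 / b)) := by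
        rw [htx, hlogx, ← hlogψ]; linear_combination htx
    _ ≤ -log 2 - log d := by linarith [log_two_le_mul_log_four_mul_one_sub_inv hb]
    _ = log (1 / (2 * d)) := by rw [one_div, log_inv, log_mul two_ne_zero hd0.ne']; ring
end

section
/- Let d ≥ 1, B ≥ 2, and b ≥ B be real numbers, and define p = 1 − (1/(2e))·(1/(2d))^{1/(B−1)}. Then ( e·(1 − p) / (1 − 1/b) )^{b−1} ≤ 1/(2d). -/
/-! The choice of `p` makes `e·(1 − p) = x^{1/(B−1)}/2` with `x = 1/(2d) ∈ (0, 1]`, and since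
`b ≥ 2` the factor `1/(1 − 1/b)` is at most `2`, so the base is at most `x^{1/(B−1)}`.
Raising it to the power `b − 1 ≥ B − 1` then gives at most `x^{(b−1)/(B−1)} ≤ x`. -/

open Real

lemma half_div_one_sub_inv_le {x b : ℝ} (hx : 0 ≤ x) (hb : 2 ≤ b) :
    x / 2 / (1 - 1 / b) ≤ x := by
  have hden : 1 / 2 ≤ 1 - 1 / b := by
    have : 1 / b ≤ 1 / 2 := one_div_le_one_div_of_le two_pos hb
    linarith
  rw [div_le_iff₀ (by linarith)]
  nlinarith

lemma rpow_one_div_rpow_le_self {x s t : ℝ} (hx₀ : 0 ≤ x) (hx₁ : x ≤ 1) (hs : 0 < s)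
    (hst : s ≤ t) : (x ^ (1 / s)) ^ t ≤ x := by
  rw [← rpow_mul hx₀]
  exact rpow_le_self_of_le_one hx₀ hx₁ (by rw [one_div_mul_eq_div, one_le_div hs]; exact hst)

/-- for reals `d ≥ 1`, `B ≥ 2`, `b ≥ B`, with
`p = 1 − (1/(2e))·(1/(2d))^{1/(B−1)}`, one has
`(e·(1 − p)/(1 − 1/b))^{b−1} ≤ 1/(2d)`. -/
theorem stmt_16 (d B b : ℝ) (hd : 1 ≤ d) (hB : 2 ≤ B) (hb : B ≤ b)
    (p : ℝ) (hp : p = 1 - (1 / (2 * Real.exp 1)) * (1 / (2 * d)) ^ (1 / (B - 1))) :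
    (Real.exp 1 * (1 - p) / (1 - 1 / b)) ^ (b - 1) ≤ 1 / (2 * d) := by
  set x := 1 / (2 * d)
  have hx₀ : 0 < x := by positivity
  have hx₁ : x ≤ 1 := by rw [div_le_one (by linarith)]; linarith
  have hroot : 0 ≤ x ^ (1 / (B - 1)) := rpow_nonneg hx₀.le _
  have hbase : Real.exp 1 * (1 - p) = x ^ (1 / (B - 1)) / 2 := by
    rw [hp]; field_simp; ring
  rw [hbase]
  calc (x ^ (1 / (B - 1)) / 2 / (1 - 1 / b)) ^ (b - 1)
      ≤ (x ^ (1 / (B - 1))) ^ (b - 1) :=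
        rpow_le_rpow
          (div_nonneg (by positivity) (sub_nonneg.2 (div_le_one_of_le₀ (by linarith) (by linarith))))
          (half_div_one_sub_inv_le hroot (by linarith)) (by linarith)
    _ ≤ x := rpow_one_div_rpow_le_self hx₀.le hx₁ (by linarith) (by linarith)
end
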